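/- Let Ĥ be an (n+k) × n matrix over F₂ with all entries i.i.d. uniform. Then Pr(Rank(Ĥ) = n − s) = S(n−s, k+s)·2^{−(k+s)s}·∏_{i=s+1}^{n}(1 − 2^{−i}) for each 0 ≤ s ≤ n, where S(ω,l) = Σ_{0 ≤ i₁ ≤ ⋯ ≤ i_l ≤ ω} 2^{-(i₁+⋯+i_l)}. -/

import Mathlib

/-- `S ω l` = sum over all nondecreasing tuples `0 ≤ i₁ ≤ ⋯ ≤ i_l ≤ ω`
of `2^{-(i₁+⋯+i_l)}`, with `S ω 0 = 1`. -/
noncomputable def S (ω l : ℕ) : ℝ := by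
  classical
  exact ∑ f ∈ Finset.univ.filter (fun f : Fin l → Fin (ω + 1) => Monotone f),
    (1 / 2 : ℝ) ^ (∑ i, (f i : ℕ))

/-!
Let `N(m, n, r)` be the number of `m × n` matrices of rank `r` over a field with `q` elements.
Appending a column `c` to a matrix whose columns span `W` keeps the rank if `c ∈ W` and raises it
by one otherwise, so `N(m, n+1, r+1) = N(m, n, r+1) q^(r+1) + N(m, n, r) (q^m - q^r)`.
For `q = 2` and `m = n + k` this is a two-term recursion for the probabilities in `n`, and the
closed form satisfies the same recursion (with the same values at `s = n`) because of the identity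
`(1 - 2^-(ω+1)) S(ω+1, l) = (1 - 2^-(l+1)) S(ω, l+1)`, valid since `S(ω, l)` is the Gaussian
binomial coefficient `[ω+l choose l]` at `q = 1/2`. That identity follows by double induction
from `S(ω+1, l+1) = S(ω+1, l) + 2^-(l+1) S(ω, l+1)`, obtained by splitting on whether `i₁ = 0`.
-/

open Finset Submodule Module

lemma S_zero_right (ω : ℕ) : S ω 0 = 1 := by
  simp [S, Subsingleton.monotone]

lemma S_zero_left (l : ℕ) : S 0 l = 1 := by
  simp [S, Subsingleton.monotone', Fin.val_eq_zero]

lemma Fin.monotone_cons_zero_iff {n m : ℕ} {g : Fin n → Fin (m + 1)} :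
    Monotone (Fin.cons 0 g : Fin (n + 1) → Fin (m + 1)) ↔ Monotone g := by
  refine ⟨fun h a b hab => by simpa using h (Fin.succ_le_succ_iff.2 hab), fun h a b hab => ?_⟩
  induction a using Fin.cases with
  | zero => simp
  | succ a =>
    induction b using Fin.cases with
    | zero => exact absurd (Fin.le_zero_iff.1 hab) (Fin.succ_ne_zero a)
    | succ b => simpa using h (Fin.succ_le_succ_iff.1 hab)

lemma S_succ_succ (ω l : ℕ) :
    S (ω + 1) (l + 1) = S (ω + 1) l + (1 / 2 : ℝ) ^ (l + 1) * S ω (l + 1) := by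
  classical
  simp only [S]
  rw [← sum_filter_add_sum_filter_not _ (fun f => f 0 = 0), filter_filter, filter_filter, mul_sum]
  congr 1
  · refine sum_nbij' Fin.tail (fun g => Fin.cons 0 g) ?_ ?_ ?_ ?_ ?_ <;>
      simp only [mem_filter, mem_univ, true_and]
    · rintro f ⟨hf, -⟩ a b hab
      exact hf (Fin.succ_le_succ_iff.2 hab)
    · exact fun g hg => ⟨Fin.monotone_cons_zero_iff.2 hg, rfl⟩
    · rintro f ⟨-, hf0⟩
      rw [← hf0, Fin.cons_self_tail]
    · exact fun g _ => Fin.tail_cons _ _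
    · rintro f ⟨-, hf0⟩
      rw [Fin.sum_univ_succ, hf0]
      simp [Fin.tail]
  · symm
    refine sum_nbij' (fun g i => (g i).succ) (fun f i => Fin.predAbove 0 (f i)) ?_ ?_ ?_ ?_ ?_ <;>
      simp only [mem_filter, mem_univ, true_and]
    · exact fun g hg => ⟨Fin.strictMono_succ.monotone.comp hg, Fin.succ_ne_zero _⟩
    · rintro f ⟨hf, -⟩
      exact (Fin.predAbove_right_monotone 0).comp hf
    · exact fun g _ => funext fun i => Fin.predAbove_zero_succ
    · rintro f ⟨hf, hf0⟩
      funext i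
      exact Fin.succ_predAbove_zero fun hi => hf0 (Fin.le_zero_iff.1 (hi ▸ hf (Fin.zero_le i)))
    · intro g _
      simp only [Fin.val_succ, sum_add_distrib, sum_const, card_univ, Fintype.card_fin, smul_eq_mul,
        mul_one]
      ring

lemma one_sub_pow_mul_S_succ_left (ω l : ℕ) :
    (1 - (1 / 2 : ℝ) ^ (ω + 1)) * S (ω + 1) l =
      (1 - (1 / 2 : ℝ) ^ (l + 1)) * S ω (l + 1) := by
  induction ω generalizing l with
  | zero =>
    induction l with
    | zero => simp [S_zero_left, S_zero_right]
    | succ l ih =>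
      rw [S_succ_succ 0 l, S_zero_left, S_zero_left]
      rw [S_zero_left] at ih
      linear_combination ih
  | succ ω ihω =>
    induction l with
    | zero =>
      have h := ihω 0
      rw [S_zero_right] at h
      rw [S_succ_succ ω 0, S_zero_right, S_zero_right]
      linear_combination (1 / 2 : ℝ) * h
    | succ l ih =>
      rw [S_succ_succ (ω + 1) l, S_succ_succ ω (l + 1)]
      linear_combination ih + (1 / 2 : ℝ) ^ (l + 2) * ihω (l + 1)

section FamilyRank

variable {K V : Type*} [Field K] [AddCommGroup V] [Module K V]

lemma Matrix.natCard_rank_eq {m n : Type*} [Fintype n] (r : ℕ) :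
    Nat.card {A : Matrix m n K // A.rank = r} =
      Nat.card {v : n → m → K // (Set.range v).finrank K = r} :=
  Nat.card_congr <| (Matrix.transposeAddEquiv m n K).toEquiv.subtypeEquiv fun A => by
    rw [rank_eq_finrank_span_cols]
    rfl

lemma Set.finrank_insert_of_mem {s : Set V} {c : V} (hc : c ∈ span K s) :
    (insert c s).finrank K = s.finrank K := by
  rw [Set.finrank, Set.finrank, span_insert_eq_span hc]

lemma natCard_finrank_range_eq_of_lt {n r : ℕ} (h : n < r) :
    Nat.card {v : Fin n → V // (Set.range v).finrank K = r} = 0 := by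
  have : ∀ v : Fin n → V, (Set.range v).finrank K ≠ r := fun v hv =>
    (finrank_range_le_card (R := K) v).not_gt (by simpa [hv] using h)
  simp [this]

variable [Module.Finite K V]

lemma Set.finrank_insert_of_notMem {s : Set V} {c : V} (hc : c ∉ span K s) :
    (insert c s).finrank K = s.finrank K + 1 := by
  rw [Set.finrank, Set.finrank, span_insert, sup_comm, finrank_sup_span_singleton hc]

lemma finrank_range_cons_eq_succ_iff {n : ℕ} (c : V) (v : Fin n → V) (r : ℕ) :
    (Set.range (Fin.cons c v : Fin (n + 1) → V)).finrank K = r + 1 ↔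
      (Set.range v).finrank K = r + 1 ∧ c ∈ span K (Set.range v) ∨
        (Set.range v).finrank K = r ∧ c ∉ span K (Set.range v) := by
  rw [Fin.range_cons]
  by_cases hc : c ∈ span K (Set.range v)
  · simp [Set.finrank_insert_of_mem hc, hc]
  · simp [Set.finrank_insert_of_notMem hc, hc]

lemma natCard_finrank_range_eq_zero {ι : Type*} :
    Nat.card {v : ι → V // (Set.range v).finrank K = 0} = 1 := by
  have h : ∀ v : ι → V, (Set.range v).finrank K = 0 ↔ v = 0 := fun v => by
    rw [Set.finrank, Submodule.finrank_eq_zero, span_eq_bot, Set.forall_mem_range, funext_iff]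
    rfl
  simp only [h, Nat.card_unique]

variable [Finite K]

lemma natCard_notMem_submodule (W : Submodule K V) :
    Nat.card {c : V // c ∉ W} = Nat.card K ^ finrank K V - Nat.card K ^ finrank K W := by
  classical
  have := Module.finite_of_finite K (M := V)
  have := Fintype.ofFinite V
  rw [Nat.card_eq_fintype_card, Fintype.card_subtype_compl, ← Nat.card_eq_fintype_card,
    ← Nat.card_eq_fintype_card, Module.natCard_eq_pow_finrank (K := K),
    Module.natCard_eq_pow_finrank (K := K) (V := W)]

lemma natCard_finrank_range_cons_eq {n : ℕ} (v : Fin n → V) (r : ℕ) :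
    Nat.card {c : V // (Set.range (Fin.cons c v : Fin (n + 1) → V)).finrank K = r + 1} =
      (if (Set.range v).finrank K = r + 1 then Nat.card K ^ (r + 1) else 0) +
        if (Set.range v).finrank K = r then Nat.card K ^ finrank K V - Nat.card K ^ r else 0 := by
  simp only [finrank_range_cons_eq_succ_iff]
  split_ifs with h₁ h₂ h₂
  · omega
  · rw [add_zero, Nat.card_congr (Equiv.subtypeEquivRight (q := (· ∈ span K (Set.range v)))
      fun c => by simp [h₁]), ← h₁]
    exact Module.natCard_eq_pow_finrank
  · rw [zero_add, Nat.card_congr (Equiv.subtypeEquivRight (q := (· ∉ span K (Set.range v)))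
      fun c => by simp [h₂]), ← h₂]
    exact natCard_notMem_submodule _
  · simp [h₁, h₂]

lemma natCard_finrank_range_succ (n r : ℕ) :
    Nat.card {v : Fin (n + 1) → V // (Set.range v).finrank K = r + 1} =
      Nat.card {v : Fin n → V // (Set.range v).finrank K = r + 1} * Nat.card K ^ (r + 1) +
        Nat.card {v : Fin n → V // (Set.range v).finrank K = r} *
          (Nat.card K ^ finrank K V - Nat.card K ^ r) := by
  classical
  have := Module.finite_of_finite K (M := V)
  have := Fintype.ofFinite V
  let e : {v : Fin (n + 1) → V // (Set.range v).finrank K = r + 1} ≃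
      Σ w : Fin n → V,
        {c : V // (Set.range (Fin.cons c w : Fin (n + 1) → V)).finrank K = r + 1} :=
    (Equiv.subtypeEquiv
      (p := fun x : (Fin n → V) × V =>
        (Set.range (Fin.cons x.2 x.1 : Fin (n + 1) → V)).finrank K = r + 1)
      ((Equiv.prodComm _ _).trans (Fin.consEquiv fun _ => V)) fun _ => Iff.rfl).symm.trans
      (Equiv.subtypeProdEquivSigmaSubtype fun w c =>
        (Set.range (Fin.cons c w : Fin (n + 1) → V)).finrank K = r + 1)
  rw [Nat.card_congr e, Nat.card_sigma]
  simp only [natCard_finrank_range_cons_eq, sum_add_distrib, ← sum_filter, sum_const, smul_eq_mul]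
  simp only [Nat.card_eq_fintype_card, Fintype.card_subtype]

end FamilyRank

noncomputable def rankProb (m n r : ℕ) : ℝ :=
  Nat.card {A : Matrix (Fin m) (Fin n) (ZMod 2) // A.rank = r} / 2 ^ (m * n)

lemma rankProb_zero (m n : ℕ) : rankProb m n 0 = (1 / 2) ^ (m * n) := by
  rw [rankProb, Matrix.natCard_rank_eq, natCard_finrank_range_eq_zero]
  simp

lemma rankProb_of_lt {m n r : ℕ} (h : n < r) : rankProb m n r = 0 := by
  rw [rankProb, Matrix.natCard_rank_eq, natCard_finrank_range_eq_of_lt h]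
  simp

lemma rankProb_succ {m r : ℕ} (n : ℕ) (h : r < m) :
    rankProb m (n + 1) (r + 1) =
      rankProb m n (r + 1) * (1 / 2) ^ (m - (r + 1)) +
        rankProb m n r * (1 - (1 / 2) ^ (m - r)) := by
  obtain ⟨d, rfl⟩ : ∃ d, m = r + 1 + d := ⟨m - (r + 1), by omega⟩
  simp only [rankProb, Matrix.natCard_rank_eq, natCard_finrank_range_succ, Nat.card_zmod,
    finrank_fin_fun]
  rw [Nat.cast_add, Nat.cast_mul, Nat.cast_mul,
    Nat.cast_sub (Nat.pow_le_pow_right two_pos (by omega)),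
    show r + 1 + d - (r + 1) = d by omega, show r + 1 + d - r = d + 1 by omega]
  push_cast
  simp only [one_div, inv_pow]
  field_simp
  ring

noncomputable def rankProbClosedForm (n k s : ℕ) : ℝ :=
  S (n - s) (k + s) * (1 / 2) ^ ((k + s) * s) * ∏ i ∈ Icc (s + 1) n, (1 - (1 / 2 : ℝ) ^ i)

lemma rankProbClosedForm_self (n k : ℕ) : rankProbClosedForm n k n = (1 / 2) ^ ((n + k) * n) := by
  rw [rankProbClosedForm, Nat.sub_self, S_zero_left, Icc_eq_empty (by omega), prod_empty, one_mul,
    mul_one, add_comm]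

lemma rankProbClosedForm_succ_zero (n k : ℕ) :
    rankProbClosedForm (n + 1) k 0 = rankProbClosedForm n (k + 1) 0 * (1 - (1 / 2) ^ (k + 1)) := by
  simp only [rankProbClosedForm, Nat.sub_zero, add_zero, mul_zero, pow_zero, mul_one]
  rw [prod_Icc_succ_top (by omega)]
  linear_combination (∏ i ∈ Icc 1 n, (1 - (1 / 2 : ℝ) ^ i)) * one_sub_pow_mul_S_succ_left n k

lemma rankProbClosedForm_succ_succ {n t : ℕ} (k : ℕ) (h : t < n) :
    rankProbClosedForm (n + 1) k (t + 1) =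
      rankProbClosedForm n (k + 1) t * (1 / 2) ^ (k + t + 1) +
        rankProbClosedForm n (k + 1) (t + 1) * (1 - (1 / 2) ^ (k + t + 2)) := by
  obtain ⟨ω, rfl⟩ : ∃ ω, n = ω + t + 1 := ⟨n - (t + 1), by omega⟩
  simp only [rankProbClosedForm, show ω + t + 1 - t = ω + 1 by omega,
    show ω + t + 1 - (t + 1) = ω by omega, show ω + t + 1 + 1 - (t + 1) = ω + 1 by omega,
    show k + 1 + t = k + t + 1 by omega, show k + (t + 1) = k + t + 1 by omega,
    show k + 1 + (t + 1) = k + t + 2 by omega]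
  rw [prod_Icc_succ_top (by omega), ← mul_prod_Ioc_eq_prod_Icc (by omega : t + 1 ≤ ω + t + 1),
    ← Finset.Icc_add_one_left_eq_Ioc]
  linear_combination ((1 / 2 : ℝ) ^ (t + 1) * (1 / 2 : ℝ) ^ ((k + t + 1) * (t + 1)) *
    ∏ i ∈ Icc (t + 1 + 1) (ω + t + 1), (1 - (1 / 2 : ℝ) ^ i)) *
      one_sub_pow_mul_S_succ_left ω (k + t + 1)

theorem rankProb_eq_closedForm (n k s : ℕ) (hs : s ≤ n) :
    rankProb (n + k) n (n - s) = rankProbClosedForm n k s := by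
  induction n generalizing k s with
  | zero =>
    obtain rfl : s = 0 := by omega
    rw [rankProb_zero, rankProbClosedForm_self]
  | succ n ih =>
    obtain rfl | hs := hs.eq_or_lt
    · rw [Nat.sub_self, rankProb_zero, rankProbClosedForm_self]
    rw [show n + 1 + k = n + (k + 1) by omega]
    cases s with
    | zero =>
      rw [rankProbClosedForm_succ_zero, ← ih (k + 1) 0 n.zero_le, Nat.sub_zero, Nat.sub_zero,
        rankProb_succ n (by omega), rankProb_of_lt n.lt_add_one,
        show n + (k + 1) - n = k + 1 by omega]
      ring
    | succ t =>
      rw [rankProbClosedForm_succ_succ k (by omega), ← ih (k + 1) t (by omega),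
        ← ih (k + 1) (t + 1) (by omega), show n + 1 - (t + 1) = n - (t + 1) + 1 by omega,
        rankProb_succ n (by omega), show n - (t + 1) + 1 = n - t by omega,
        show n + (k + 1) - (n - t) = k + t + 1 by omega,
        show n + (k + 1) - (n - (t + 1)) = k + t + 2 by omega]

/-- For an `(n+k) × n` matrix over `F₂` with i.i.d. uniform entries (uniform counting over
all `2^{(n+k)n}` matrices), `Pr(Rank = n − s) = S(n−s,k+s)·2^{−(k+s)s}·∏_{i=s+1}^{n}(1−2^{−i})`. -/
theorem stmt_7 (n k s : ℕ) (hs : s ≤ n) :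
    (Nat.card {A : Matrix (Fin (n + k)) (Fin n) (ZMod 2) // A.rank = n - s} : ℝ)
        / 2 ^ ((n + k) * n)
      = S (n - s) (k + s) * (1 / 2 : ℝ) ^ ((k + s) * s) *
          ∏ i ∈ Finset.Icc (s + 1) n, (1 - (1 / 2 : ℝ) ^ i) :=
  rankProb_eq_closedForm n k s hs
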